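/- arXiv:2101.03056 — 5 statements merged into one kernel-verified Lean document; each statement's English description precedes it below -/
import Mathlib

section
/- Let $a, n$ be positive integers and $t \in \{0, 1, \ldots, n\}$, and let $w_1, \ldots, w_n$ be non-negative integers with $\sum_{i=1}^n w_i = an + t$. Then $\prod_{i=1}^n w_i \leq a^{n-t}(a+1)^t$. -/
open Finset

lemma amgm_key (a : ℕ) (ha : 0 < a) :
    ∀ (m n t : ℕ), 0 < n → t ≤ n → ∀ w : Fin n → ℕ,
      (∑ i, w i = a * n + t) → (∑ i, (w i)^2 = m) →
      ∏ i, w i ≤ a ^ (n - t) * (a + 1) ^ t := by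
  intro m
  induction m using Nat.strong_induction_on with
  | _ m ih =>
    intro n t hn ht w hsum hm
    by_cases hall : ∀ i, a ≤ w i ∧ w i ≤ a + 1
    · -- balanced case
      set T := Finset.univ.filter (fun i : Fin n => w i = a + 1) with hT
      have hcardle : T.card ≤ n := by
        simpa using Finset.card_filter_le Finset.univ (fun i : Fin n => w i = a + 1)
      have hsum2 : ∑ i, w i = a * n + T.card := by
        have : ∑ i, w i = ∑ i, (a + if w i = a + 1 then 1 else 0) := by
          apply Finset.sum_congr rfl
          intro i _
          obtain ⟨h1, h2⟩ := hall i
          by_cases h : w i = a + 1 <;> simp [h] <;> omega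
        rw [this, Finset.sum_add_distrib]
        simp [hT, Finset.sum_ite, mul_comm]
      have hTt : T.card = t := by omega
      have hprod : ∏ i, w i = (a + 1) ^ t * a ^ (n - t) := by
        rw [← Finset.prod_mul_prod_compl T]
        have h1 : ∏ i ∈ T, w i = (a + 1) ^ t := by
          rw [Finset.prod_congr rfl (fun i hi => by simp [hT] at hi; exact hi)]
          simp [hTt]
        have h2 : ∏ i ∈ Tᶜ, w i = a ^ (n - t) := by
          have : ∀ i ∈ Tᶜ, w i = a := by
            intro i hi
            simp [hT] at hi
            obtain ⟨g1, g2⟩ := hall i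
            omega
          rw [Finset.prod_congr rfl this]
          simp [Finset.card_compl, hTt]
        rw [h1, h2]
      rw [hprod, mul_comm]
    · push_neg at hall
      obtain ⟨i, hi⟩ := hall
      -- find p q with w q + 2 ≤ w p
      obtain ⟨p, q, hpq, hgap⟩ : ∃ p q : Fin n, p ≠ q ∧ w q + 2 ≤ w p := by
        by_cases hc : a ≤ w i
        · -- w i ≥ a + 2; find j with w j ≤ a
          have hi2 : a + 2 ≤ w i := by have := hi hc; omega
          by_contra hno
          push_neg at hno
          have hbig : ∀ j, a + 1 ≤ w j := by
            intro j
            by_contra hj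
            push_neg at hj
            by_cases hji : j = i
            · rw [hji] at hj; omega
            · have := hno i j (fun h => hji h.symm); omega
          have hlt : ∑ _j : Fin n, (a + 1) < ∑ j, w j :=
            Finset.sum_lt_sum (fun j _ => hbig j) ⟨i, Finset.mem_univ i, by omega⟩
          simp only [Finset.sum_const, Finset.card_univ, Fintype.card_fin, smul_eq_mul] at hlt
          have hring : n * (a + 1) = a * n + n := by ring
          omega
        · -- w i < a; find j with w j ≥ a + 1
          push_neg at hc
          by_contra hno
          push_neg at hno
          have hsmall : ∀ j, w j ≤ a := by
            intro j
            by_contra hj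
            push_neg at hj
            by_cases hji : j = i
            · rw [hji] at hj; omega
            · have := hno j i hji; omega
          have hlt : ∑ j, w j < ∑ _j : Fin n, a :=
            Finset.sum_lt_sum (fun j _ => hsmall j) ⟨i, Finset.mem_univ i, by omega⟩
          simp only [Finset.sum_const, Finset.card_univ, Fintype.card_fin, smul_eq_mul] at hlt
          have hring : n * a = a * n := by ring
          omega
      -- smoothing step
      set w' : Fin n → ℕ :=
        Function.update (Function.update w p (w p - 1)) q (w q + 1) with hw'
      have hw'p : w' p = w p - 1 := by
        simp [hw', Function.update_of_ne hpq, Function.update_self]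
      have hw'q : w' q = w q + 1 := by simp [hw']
      have hw'k : ∀ k, k ≠ p → k ≠ q → w' k = w k := by
        intro k h1 h2
        simp [hw', Function.update_of_ne h1, Function.update_of_ne h2]
      have hqmem : q ∈ Finset.univ.erase p := by
        simp [Finset.mem_erase, Ne.symm hpq]
      have key_prod : ∀ f : Fin n → ℕ,
          ∏ k, f k = f p * (f q * ∏ k ∈ (Finset.univ.erase p).erase q, f k) := by
        intro f
        rw [← Finset.mul_prod_erase Finset.univ f (Finset.mem_univ p),
            ← Finset.mul_prod_erase _ f hqmem]
      have key_sum : ∀ f : Fin n → ℕ,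
          ∑ k, f k = f p + (f q + ∑ k ∈ (Finset.univ.erase p).erase q, f k) := by
        intro f
        rw [← Finset.add_sum_erase Finset.univ f (Finset.mem_univ p),
            ← Finset.add_sum_erase _ f hqmem]
      have hcongr : ∀ g : ℕ → ℕ,
          ∑ k ∈ (Finset.univ.erase p).erase q, g (w' k)
            = ∑ k ∈ (Finset.univ.erase p).erase q, g (w k) := by
        intro g
        apply Finset.sum_congr rfl
        intro k hk
        simp only [Finset.mem_erase] at hk
        rw [hw'k k hk.2.1 hk.1]
      have hpcongr : ∏ k ∈ (Finset.univ.erase p).erase q, w' k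
            = ∏ k ∈ (Finset.univ.erase p).erase q, w k := by
        apply Finset.prod_congr rfl
        intro k hk
        simp only [Finset.mem_erase] at hk
        rw [hw'k k hk.2.1 hk.1]
      have hscongr : ∑ k ∈ (Finset.univ.erase p).erase q, w' k
            = ∑ k ∈ (Finset.univ.erase p).erase q, w k := by
        apply Finset.sum_congr rfl
        intro k hk
        simp only [Finset.mem_erase] at hk
        rw [hw'k k hk.2.1 hk.1]
      have hsum' : ∑ k, w' k = a * n + t := by
        rw [key_sum w', hw'p, hw'q, hscongr]
        rw [key_sum w] at hsum
        omega
      have hsq : ∑ k, (w' k)^2 < m := by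
        rw [key_sum (fun k => (w' k)^2), hw'p, hw'q, hcongr (fun x => x^2)]
        rw [key_sum (fun k => (w k)^2)] at hm
        have h1 : (w p - 1)^2 + (w q + 1)^2 < (w p)^2 + (w q)^2 := by
          obtain ⟨c, hc⟩ : ∃ c, w p = w q + 2 + c := ⟨w p - (w q + 2), by omega⟩
          rw [hc]
          have hc2 : w q + 2 + c - 1 = w q + 1 + c := by omega
          rw [hc2]
          nlinarith
        omega
      have hple : ∏ k, w k ≤ ∏ k, w' k := by
        rw [key_prod w, key_prod w', hw'p, hw'q, hpcongr]
        have h1 : w p * w q ≤ (w p - 1) * (w q + 1) := by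
          obtain ⟨c, hc⟩ : ∃ c, w p = w q + 2 + c := ⟨w p - (w q + 2), by omega⟩
          rw [hc]
          have hc2 : w q + 2 + c - 1 = w q + 1 + c := by omega
          rw [hc2]
          nlinarith
        calc w p * (w q * ∏ k ∈ (Finset.univ.erase p).erase q, w k)
            = (w p * w q) * ∏ k ∈ (Finset.univ.erase p).erase q, w k := by ring
          _ ≤ ((w p - 1) * (w q + 1)) * ∏ k ∈ (Finset.univ.erase p).erase q, w k :=
              Nat.mul_le_mul_right _ h1
          _ = (w p - 1) * ((w q + 1) * ∏ k ∈ (Finset.univ.erase p).erase q, w k) := by ring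
      exact hple.trans (ih _ hsq n t hn ht w' hsum' rfl)

theorem integral_AM_GM (a n t : ℕ) (ha : 0 < a) (hn : 0 < n) (ht : t ≤ n)
    (w : Fin n → ℕ) (hsum : ∑ i, w i = a * n + t) :
    ∏ i, w i ≤ a ^ (n - t) * (a + 1) ^ t :=
  amgm_key a ha (∑ i, (w i)^2) n t hn ht w hsum rfl
end

section
/- Let $d \geq 1$ and $a \geq d+1$ be integers, and set $R = d(1 + d + d^2)$. Then for all $i \in \{1, \ldots, d\}$ we have $(a - d + i)^R \leq (a+1)^{R - d + i - 1}(a - d)^{d - i + 1}$. -/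
lemma bern_aux (c n : ℕ) : c ^ (n + 1) + (n + 1) * c ^ n ≤ (c + 1) ^ (n + 1) := by
  induction n with
  | zero => simp
  | succ n ih =>
      have h := Nat.mul_le_mul_right (c + 1) ih
      have hr : (c ^ (n + 1) + (n + 1) * c ^ n) * (c + 1)
          = c ^ (n + 2) + (n + 2) * c ^ (n + 1) + (n + 1) * c ^ n := by ring
      calc c ^ (n + 2) + (n + 2) * c ^ (n + 1)
          ≤ (c ^ (n + 1) + (n + 1) * c ^ n) * (c + 1) := by rw [hr]; exact Nat.le_add_right _ _
        _ ≤ (c + 1) ^ (n + 1) * (c + 1) := h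
        _ = (c + 1) ^ (n + 2) := by ring

lemma key_aux (d a : ℕ) (ha : d + 1 ≤ a) :
    ∀ j, j ≤ d → a ^ (j * (d + 1) + 1) ≤ (a - j) * (a + 1) ^ (j * (d + 1)) := by
  intro j
  induction j with
  | zero => intro _; simp
  | succ j ih =>
      intro hj
      have H := ih (by omega)
      obtain ⟨e, he, haa⟩ : ∃ e, 1 ≤ e ∧ a = d + e := ⟨a - d, by omega, by omega⟩
      have hm1 : a - j = (a - (j + 1)) + 1 := by omega
      set m := a - (j + 1) with hmm
      have hcm : a ≤ (d + 1) * m := by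
        have h1 : e ≤ m := by omega
        have h2 : (d + 1) * e ≤ (d + 1) * m := Nat.mul_le_mul_left _ h1
        have h3 : d ≤ d * e := Nat.le_mul_of_pos_right d he
        have h4 : (d + 1) * e = d * e + e := by ring
        omega
      have hstep : (m + 1) * a ^ (d + 1) ≤ m * (a + 1) ^ (d + 1) := by
        have h1 : (m + 1) * a ^ (d + 1) ≤ m * (a ^ (d + 1) + (d + 1) * a ^ d) := by
          have hx : a * a ^ d ≤ (d + 1) * m * a ^ d := Nat.mul_le_mul_right _ hcm
          have e1 : (m + 1) * a ^ (d + 1) = m * a ^ (d + 1) + a * a ^ d := by ring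
          have e2 : m * (a ^ (d + 1) + (d + 1) * a ^ d)
              = m * a ^ (d + 1) + (d + 1) * m * a ^ d := by ring
          omega
        have h2 : m * (a ^ (d + 1) + (d + 1) * a ^ d) ≤ m * (a + 1) ^ (d + 1) :=
          Nat.mul_le_mul_left _ (bern_aux a d)
        omega
      calc a ^ ((j + 1) * (d + 1) + 1)
          = a ^ (j * (d + 1) + 1) * a ^ (d + 1) := by rw [← pow_add]; congr 1; ring
        _ ≤ (a - j) * (a + 1) ^ (j * (d + 1)) * a ^ (d + 1) := Nat.mul_le_mul_right _ H
        _ = ((m + 1) * a ^ (d + 1)) * (a + 1) ^ (j * (d + 1)) := by rw [hm1]; ring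
        _ ≤ (m * (a + 1) ^ (d + 1)) * (a + 1) ^ (j * (d + 1)) := Nat.mul_le_mul_right _ hstep
        _ = (a - (j + 1)) * (a + 1) ^ ((j + 1) * (d + 1)) := by
            rw [mul_assoc, ← pow_add, ← hmm,
              show d + 1 + j * (d + 1) = (j + 1) * (d + 1) from by ring]

lemma exp_aux (k d M : ℕ) (hk : k ≤ d) (hM : 1 ≤ M) :
    k * (M - 1) + (d - k) * M = d * M - k := by
  obtain ⟨e, rfl⟩ : ∃ e, d = k + e := ⟨d - k, by omega⟩
  obtain ⟨m, rfl⟩ : ∃ m, M = m + 1 := ⟨M - 1, by omega⟩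
  have h : (k + e) * (m + 1) = k * (m + 1 - 1) + (k + e - k) * (m + 1) + k := by
    simp only [Nat.add_sub_cancel, Nat.add_sub_cancel_left]; ring
  rw [h, Nat.add_sub_cancel, Nat.add_sub_cancel]

theorem R_condition (a d i : ℕ) (hd : 1 ≤ d) (ha : d + 1 ≤ a) (hi : 1 ≤ i) (hid : i ≤ d) :
    (a - d + i) ^ (d * (1 + d + d ^ 2)) ≤
      (a + 1) ^ (d * (1 + d + d ^ 2) - d + i - 1) * (a - d) ^ (d - i + 1) := by
  set M := 1 + d + d ^ 2 with hM
  have hM1 : 1 ≤ M := by omega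
  have hMd : d * (d + 1) + 1 = M := by rw [hM]; ring
  have hA : a ^ M ≤ (a - d) * (a + 1) ^ (M - 1) := by
    have h := key_aux d a ha d le_rfl
    have hM2 : M - 1 = d * (d + 1) := by omega
    rwa [hMd, ← hM2] at h
  set k := d - i + 1 with hk
  set x := a - d + i with hx
  have hxa : x ≤ a := by omega
  have hkd : k ≤ d := by omega
  have hxM : x ^ M ≤ (a - d) * (a + 1) ^ (M - 1) :=
    le_trans (Nat.pow_le_pow_left hxa M) hA
  have h1 : x ^ (k * M) ≤ ((a - d) * (a + 1) ^ (M - 1)) ^ k := by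
    rw [mul_comm k M, pow_mul]
    exact Nat.pow_le_pow_left hxM k
  have h2 : x ^ ((d - k) * M) ≤ (a + 1) ^ ((d - k) * M) :=
    Nat.pow_le_pow_left (by omega) _
  have hsplit : k * M + (d - k) * M = d * M := by
    rw [← Nat.add_mul]; congr 1; omega
  have hexp := exp_aux k d M hkd hM1
  have hfin : x ^ (d * M) ≤ (a + 1) ^ (d * M - k) * (a - d) ^ k := by
    calc x ^ (d * M) = x ^ (k * M) * x ^ ((d - k) * M) := by rw [← pow_add, hsplit]
      _ ≤ ((a - d) * (a + 1) ^ (M - 1)) ^ k * (a + 1) ^ ((d - k) * M) :=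
          Nat.mul_le_mul h1 h2
      _ = (a + 1) ^ (k * (M - 1) + (d - k) * M) * (a - d) ^ k := by
          rw [mul_pow, ← pow_mul, pow_add, mul_comm k (M - 1)]; ring
      _ = (a + 1) ^ (d * M - k) * (a - d) ^ k := by rw [hexp]
  have htarget : d * M - k = d * M - d + i - 1 := by
    have hdM : d ≤ d * M := Nat.le_mul_of_pos_right d (by omega)
    omega
  rw [← htarget]
  exact hfin
end

section
/- Let $d \geq 1$ and $a \geq d+1$ be integers, and let $r \geq d(d+1)$ be an integer. Then $(a+1)^r(a-d) \geq a^{r+1}$. -/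
lemma pow_succ_lower_aux (a : ℤ) (ha : 0 ≤ a) (m : ℕ) :
    a ^ (m + 1) + (m + 1) * a ^ m ≤ (a + 1) ^ (m + 1) := by
  induction m with
  | zero => simp
  | succ n ih =>
    have hpn : (0:ℤ) ≤ a ^ n := pow_nonneg ha n
    calc a ^ (n + 2) + ((n:ℤ) + 2) * a ^ (n + 1)
        ≤ (a + 1) * (a ^ (n + 1) + ((n:ℤ) + 1) * a ^ n) := by
          have h1 : a ^ (n + 1) = a * a ^ n := by ring
          have h2 : a ^ (n + 2) = a * a * a ^ n := by ring
          nlinarith [pow_nonneg ha (n+1)]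
      _ ≤ (a + 1) * (a + 1) ^ (n + 1) := by
          have : (0:ℤ) ≤ a + 1 := by linarith
          push_cast at ih ⊢
          nlinarith [ih]
      _ = (a + 1) ^ (n + 2) := by ring

theorem pow_ineq_general_d (a d : ℤ) (r : ℕ) (hd : 1 ≤ d) (ha : d + 1 ≤ a)
    (hr : d * (d + 1) ≤ (r : ℤ)) :
    (a + 1) ^ r * (a - d) ≥ a ^ (r + 1) := by
  have ha0 : (0:ℤ) ≤ a := by linarith
  rcases r with _ | m
  · simp at hr; nlinarith
  have key := pow_succ_lower_aux a ha0 m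
  have had : (1:ℤ) ≤ a - d := by linarith
  have hpm : (0:ℤ) ≤ a ^ m := pow_nonneg ha0 m
  have hrd : ((m:ℤ) + 1 - d) * a - ((m:ℤ) + 1) * d ≥ 0 := by
    push_cast at hr
    have h4 : (0:ℤ) ≤ (m:ℤ) + 1 - d := by nlinarith
    nlinarith [mul_nonneg h4 (by linarith : (0:ℤ) ≤ a - (d+1))]
  have h2 : (a ^ (m + 1) + ((m:ℤ) + 1) * a ^ m) * (a - d) ≥ a ^ (m + 1 + 1) := by
    have h1 : a ^ (m + 1) = a * a ^ m := by ring
    have h2 : a ^ (m + 1 + 1) = a * a * a ^ m := by ring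
    nlinarith
  have h3 : (a + 1) ^ (m + 1) * (a - d) ≥ (a ^ (m + 1) + ((m:ℤ) + 1) * a ^ m) * (a - d) := by
    apply mul_le_mul_of_nonneg_right _ (by linarith)
    exact_mod_cast key
  push_cast
  linarith
end

section
/- For integers $a > d \geq 1$ and $r \geq 2$, the quantity $x_\star(r,d) = \log\left(\frac{a+1}{a}\right) \Big/ \log\left(\frac{(a+1)^r}{a(a-d)^{r-1}}\right)$ satisfies $0 < x_\star(r,d) < \frac{1}{d(r-1)}$. -/
/-!
Write `N = log ((a+1)/a)` and `L = log ((a+1)/(a-d))`, so that the denominator of `x⋆` is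
`N + (r-1) L`. Everything follows from `d N ≤ L`, which comes from the two elementary bounds
`log (1 + 1/a) ≤ 1/a` and `log ((a+1)/(a-d)) ≥ 1 - (a-d)/(a+1) = (d+1)/(a+1)` together with
`d/a ≤ (d+1)/(a+1)`: then `d (r-1) N < N + (r-1) L`.
-/

open Real

lemma mul_log_succ_div_le_log_succ_div_sub {a d : ℝ} (hd : 0 ≤ d) (had : d < a) :
    d * log ((a + 1) / a) ≤ log ((a + 1) / (a - d)) := by
  have ha : 0 < a := hd.trans_lt had
  have had' : 0 < a - d := sub_pos.mpr had
  have hN : log ((a + 1) / a) ≤ 1 / a :=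
    (log_le_sub_one_of_pos (by positivity)).trans_eq (by field_simp; ring)
  have hL : (d + 1) / (a + 1) ≤ log ((a + 1) / (a - d)) := by
    have := one_sub_inv_le_log_of_pos (show 0 < (a + 1) / (a - d) by positivity)
    rw [inv_div] at this
    convert this using 1
    field_simp
    ring
  calc d * log ((a + 1) / a) ≤ d * (1 / a) := mul_le_mul_of_nonneg_left hN hd
    _ ≤ (d + 1) / (a + 1) := by
        rw [mul_one_div, div_le_div_iff₀ ha (by linarith)]
        linarith
    _ ≤ log ((a + 1) / (a - d)) := hL

lemma log_pow_succ_div_mul_pow {a b c : ℝ} (ha : 0 < a) (hb : 0 < b) (hc : 0 < c) (s : ℕ) :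
    log (c ^ (s + 1) / (a * b ^ s)) = log (c / a) + s * log (c / b) := by
  have hsplit : c ^ (s + 1) / (a * b ^ s) = c / a * (c / b) ^ s := by
    rw [div_pow, pow_succ']
    field_simp
  rw [hsplit, log_mul (by positivity) (by positivity), log_pow]

lemma div_add_mul_lt_one_div_mul {N L d s : ℝ} (hN : 0 < N) (hd : 0 < d) (hs : 0 < s)
    (hdNL : d * N ≤ L) : N / (N + s * L) < 1 / (d * s) := by
  have hL : 0 < L := (mul_pos hd hN).trans_le hdNL
  rw [div_lt_div_iff₀ (by positivity) (by positivity)]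
  nlinarith [mul_le_mul_of_nonneg_left hdNL hs.le]

theorem xstar_bounds (a d : ℤ) (hd : 1 ≤ d) (had : d < a) (r : ℕ) (hr : 2 ≤ r) :
    0 < Real.log (((a : ℝ) + 1) / a) /
          Real.log (((a : ℝ) + 1) ^ r / ((a : ℝ) * ((a : ℝ) - d) ^ (r - 1))) ∧
    Real.log (((a : ℝ) + 1) / a) /
          Real.log (((a : ℝ) + 1) ^ r / ((a : ℝ) * ((a : ℝ) - d) ^ (r - 1)))
      < 1 / ((d : ℝ) * ((r : ℝ) - 1)) := by
  obtain ⟨s, rfl⟩ : ∃ s, r = s + 1 := ⟨r - 1, by omega⟩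
  have hd' : (1 : ℝ) ≤ d := by exact_mod_cast hd
  have had' : (d : ℝ) < a := by exact_mod_cast had
  have hs : (1 : ℝ) ≤ s := by exact_mod_cast (show 1 ≤ s by omega)
  have ha : (0 : ℝ) < a := by linarith
  have hN : 0 < log (((a : ℝ) + 1) / a) := log_pos (by rw [lt_div_iff₀ ha]; linarith)
  have hdNL := mul_log_succ_div_le_log_succ_div_sub (by linarith) had'
  rw [Nat.add_sub_cancel, log_pow_succ_div_mul_pow ha (by linarith) (by linarith),
    show ((s + 1 : ℕ) : ℝ) - 1 = s by push_cast; ring]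
  have hL : 0 < log (((a : ℝ) + 1) / (a - d)) := (mul_pos (by linarith) hN).trans_le hdNL
  exact ⟨by positivity, div_add_mul_lt_one_div_mul hN (by linarith) (by linarith) hdNL⟩
end

section
/- For all integers $a \geq 2$ and $r \geq 2$, letting $x_\star = \frac{\log((a+1)/a)}{\log\left(\frac{(a+1)^{r+1}}{(a-1)^r a}\right)}$ and $R = 3$, we have $-\frac{\log(a/(a-1))}{\log((a+1)/a)} x_\star + \left(1 - \frac{R-1}{rR}\right)(1 - x_\star) \leq \frac{r-1+x_\star}{r}$. -/
/- Write `u = log ((a+1)/a)` and `v = log (a/(a-1))`. The logarithm in the denominator of `x⋆`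
is `D = r (u + v) + u`, so `x⋆ = u / D` and the difference of the two sides is exactly
`(R - 1) (u + v) / (R D) ≥ 0` for every `R ≥ 1`. -/

open Real

theorem exponent_comparison_of_nonneg {u v r R : ℝ} (hu : 0 < u) (hv : 0 ≤ v) (hr : 0 ≤ r)
    (hR : 1 ≤ R) :
    -(v / u) * (u / (r * (u + v) + u)) + (1 - (R - 1) / (r * R)) * (1 - u / (r * (u + v) + u))
      ≤ (r - 1 + u / (r * (u + v) + u)) / r := by
  rcases hr.eq_or_lt with rfl | hr
  · -- at `r = 0` the divisions by `r` are junk and `x⋆ = 1`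
    have : 0 ≤ v / u := by positivity
    simp [hu.ne']
    linarith
  have hD : 0 < r * (u + v) + u := by positivity
  have key : (r - 1 + u / (r * (u + v) + u)) / r
      - (-(v / u) * (u / (r * (u + v) + u))
        + (1 - (R - 1) / (r * R)) * (1 - u / (r * (u + v) + u)))
      = (R - 1) * (u + v) / (R * (r * (u + v) + u)) := by
    field_simp
    ring
  rw [← sub_nonneg, key]
  have : 0 ≤ R - 1 := by linarith
  positivity

theorem log_add_one_pow_succ_div (x : ℝ) (r : ℕ) (hx : 1 < x) :
    log ((x + 1) ^ (r + 1) / ((x - 1) ^ r * x))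
      = r * (log ((x + 1) / x) + log (x / (x - 1))) + log ((x + 1) / x) := by
  have h₀ : x - 1 ≠ 0 := by linarith
  have h₁ : x ≠ 0 := by linarith
  have h₂ : x + 1 ≠ 0 := by linarith
  rw [log_div (by positivity) (by positivity), log_mul (by positivity) h₁, log_pow, log_pow,
    log_div h₂ h₁, log_div h₁ h₀]
  push_cast
  ring

theorem exponent_comparison_R3_general (a : ℤ) (r : ℕ) (ha : 2 ≤ a) :
    -(Real.log ((a : ℝ) / ((a : ℝ) - 1)) / Real.log (((a : ℝ) + 1) / a)) *
        (Real.log (((a : ℝ) + 1) / a) /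
          Real.log (((a : ℝ) + 1) ^ (r + 1) / (((a : ℝ) - 1) ^ r * a))) +
      (1 - ((3 : ℝ) - 1) / ((r : ℝ) * 3)) *
        (1 - Real.log (((a : ℝ) + 1) / a) /
          Real.log (((a : ℝ) + 1) ^ (r + 1) / (((a : ℝ) - 1) ^ r * a)))
      ≤ ((r : ℝ) - 1 +
          Real.log (((a : ℝ) + 1) / a) /
            Real.log (((a : ℝ) + 1) ^ (r + 1) / (((a : ℝ) - 1) ^ r * a))) / r := by
  have ha' : (1 : ℝ) < a := by
    have : (2 : ℝ) ≤ a := by exact_mod_cast ha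
    linarith
  have hu : 0 < log (((a : ℝ) + 1) / a) := log_pos <| by rw [lt_div_iff₀ (by linarith)]; linarith
  have hv : 0 ≤ log ((a : ℝ) / (a - 1)) := log_nonneg <| by rw [le_div_iff₀ (by linarith)]; linarith
  rw [log_add_one_pow_succ_div _ r ha']
  exact exponent_comparison_of_nonneg hu hv r.cast_nonneg (by norm_num)

theorem exponent_comparison_R3 (a : ℤ) (r : ℕ) (ha : 2 ≤ a) (hr : 2 ≤ r) :
    -(Real.log ((a : ℝ) / ((a : ℝ) - 1)) / Real.log (((a : ℝ) + 1) / a)) *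
        (Real.log (((a : ℝ) + 1) / a) /
          Real.log (((a : ℝ) + 1) ^ (r + 1) / (((a : ℝ) - 1) ^ r * a))) +
      (1 - ((3 : ℝ) - 1) / ((r : ℝ) * 3)) *
        (1 - Real.log (((a : ℝ) + 1) / a) /
          Real.log (((a : ℝ) + 1) ^ (r + 1) / (((a : ℝ) - 1) ^ r * a)))
      ≤ ((r : ℝ) - 1 +
          Real.log (((a : ℝ) + 1) / a) /
            Real.log (((a : ℝ) + 1) ^ (r + 1) / (((a : ℝ) - 1) ^ r * a))) / r :=
  exponent_comparison_R3_general a r ha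
end
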